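/- There exists a solvable MPP instance (G, R, x_I, x_G) such that no solution simultaneously attains the minimum makespan and the minimum maximum distance; in particular, every solution attaining the minimum makespan contains a robot whose traveled distance is strictly greater than the minimum maximum distance over all solutions. -/

import Mathlib

/-!
Formalization of multi-robot path planning on graphs (MPP).

An MPP instance consists of a connected simple graph `G` on a vertex type `V`,
a finite set of robots (an index type `R`), and injective start/goal
configurations `xI xG : R → V`.  A scheduled path is a map `ℕ → V`.
-/

namespace MPPFormal

variable {V R : Type}

/-- The arrival time of a path `p` with goal `g`: the smallest time `t`
with `p t = g`. -/
noncomputable def arrivalTime (g : V) (p : ℕ → V) : ℕ := sInf {t | p t = g}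

/-- A feasible scheduled path from `s` to `g` in the graph `G`:
it starts at `s`, reaches `g` at some time, stays at `g` forever after the
first time it reaches `g`, and at every time step it either traverses an
edge of `G` or stays put. -/
def FeasiblePath (G : SimpleGraph V) (s g : V) (p : ℕ → V) : Prop :=
  p 0 = s ∧ (∃ t, p t = g) ∧ (∀ t, arrivalTime g p ≤ t → p t = g) ∧
    ∀ t, G.Adj (p t) (p (t + 1)) ∨ p t = p (t + 1)

/-- Two scheduled paths collide if they meet at the same vertex at the same
time, or if they swap along an edge head-on. -/
def Collide (p q : ℕ → V) : Prop :=
  (∃ t, p t = q t) ∨ ∃ t, p t = q (t + 1) ∧ p (t + 1) = q t ∧ p t ≠ p (t + 1)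

/-- The length of a scheduled path: the number of time steps at which it
actually moves. -/
noncomputable def pathLen (p : ℕ → V) : ℕ := Set.ncard {t | p t ≠ p (t + 1)}

/-- A solution to the MPP instance `(G, R, xI, xG)`: a family of pairwise
non-colliding feasible paths, one per robot. -/
def IsSolution (G : SimpleGraph V) (xI xG : R → V) (p : R → ℕ → V) : Prop :=
  (∀ i, FeasiblePath G (xI i) (xG i) (p i)) ∧
    Pairwise fun i j => ¬ Collide (p i) (p j)

/-- `(G, xI, xG)` together with the robot index type `R` forms an MPP
instance: the graph is connected and the start and goal configurations are
injective. -/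
def IsMPPInstance (G : SimpleGraph V) (xI xG : R → V) : Prop :=
  G.Connected ∧ Function.Injective xI ∧ Function.Injective xG

variable [Fintype R]

/-- Total arrival time of a solution. -/
noncomputable def totalTime (xG : R → V) (p : R → ℕ → V) : ℕ :=
  ∑ i, arrivalTime (xG i) (p i)

/-- Makespan (last arrival time) of a solution. -/
noncomputable def makespan (xG : R → V) (p : R → ℕ → V) : ℕ :=
  Finset.univ.sup fun i => arrivalTime (xG i) (p i)

/-- Total distance traveled in a solution. -/
noncomputable def totalDist (p : R → ℕ → V) : ℕ := ∑ i, pathLen (p i)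

/-- Maximum single-robot distance of a solution. -/
noncomputable def maxDist (p : R → ℕ → V) : ℕ :=
  Finset.univ.sup fun i => pathLen (p i)

/-- Minimum total arrival time over all solutions. -/
noncomputable def minTotalTime (G : SimpleGraph V) (xI xG : R → V) : ℕ :=
  sInf {c | ∃ p, IsSolution G xI xG p ∧ totalTime xG p = c}

/-- Minimum makespan over all solutions. -/
noncomputable def minMakespan (G : SimpleGraph V) (xI xG : R → V) : ℕ :=
  sInf {c | ∃ p, IsSolution G xI xG p ∧ makespan xG p = c}

/-- Minimum total distance over all solutions. -/
noncomputable def minTotalDist (G : SimpleGraph V) (xI xG : R → V) : ℕ :=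
  sInf {c | ∃ p, IsSolution G xI xG p ∧ totalDist p = c}

/-- Minimum maximum distance over all solutions. -/
noncomputable def minMaxDist (G : SimpleGraph V) (xI xG : R → V) : ℕ :=
  sInf {c | ∃ p, IsSolution G xI xG p ∧ maxDist p = c}

end MPPFormal

/-!
Take the path `0 - 1 - ⋯ - 7` with chords `5 - 7` and `1 - 7`, and send one robot from `5` to `0`
and another from `2` to `6`. Both are at distance `3` from their goals, and their unique shortest
routes `5 - 7 - 1 - 0` and `2 - 1 - 7 - 6` traverse the edge `1 - 7` in opposite directions. The
second robot can detour through `3, 4, 5` so that everyone arrives by time `4`, and the first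
robot can instead wait two steps so that nobody travels more than `3`. But a robot that arrives
within four steps and travels at most `3` waits once and otherwise follows its shortest route, so
the two robots meet or swap on the edge `1 - 7`.
-/

namespace MPPFormal

section Paths

variable {V : Type} {G : SimpleGraph V} {s g : V} {p q : ℕ → V}

lemma arrivalTime_le {t : ℕ} (h : p t = g) : arrivalTime g p ≤ t :=
  Nat.sInf_le h

lemma arrivalTime_eq {t : ℕ} (h : p t = g) (hlt : ∀ u < t, p u ≠ g) : arrivalTime g p = t :=
  le_antisymm (arrivalTime_le h) (le_csInf ⟨t, h⟩ fun _ hu => not_lt.1 fun hut => hlt _ hut hu)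

abbrev LazyStep (G : SimpleGraph V) (x y : V) : Prop := G.Adj x y ∨ x = y

namespace FeasiblePath

variable (hp : FeasiblePath G s g p)
include hp

lemma eq_goal {t : ℕ} (ht : arrivalTime g p ≤ t) : p t = g := hp.2.2.1 t ht

lemma lazyStep (t : ℕ) : LazyStep G (p t) (p (t + 1)) := hp.2.2.2 t

lemma setOf_moves_subset : {t | p t ≠ p (t + 1)} ⊆ Set.Iio (arrivalTime g p) := by
  intro t ht
  by_contra h
  rw [Set.mem_Iio, not_lt] at h
  exact ht ((hp.eq_goal h).trans (hp.eq_goal (by omega)).symm)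

lemma card_le_pathLen {S : Finset ℕ} (hS : ∀ t ∈ S, p t ≠ p (t + 1)) : S.card ≤ pathLen p := by
  rw [← Set.ncard_coe_finset]
  exact Set.ncard_le_ncard hS ((Set.finite_Iio _).subset hp.setOf_moves_subset)

lemma exists_wait {n : ℕ} (h : pathLen p < n) : ∃ t < n, p t = p (t + 1) := by
  by_contra! hmove
  have := hp.card_le_pathLen (S := Finset.range n) (by simpa using hmove)
  rw [Finset.card_range] at this
  omega

lemma potential_le_add_pathLen (φ : V → ℕ) (hφ : ∀ x y, G.Adj x y → φ x ≤ φ y + 1) :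
    φ s ≤ φ g + pathLen p := by
  classical
  have key : ∀ T, φ (p 0) ≤ φ (p T) + ((Finset.range T).filter fun t => p t ≠ p (t + 1)).card := by
    intro T
    induction T with
    | zero => simp
    | succ n ih =>
      rw [Finset.range_add_one, Finset.filter_insert]
      by_cases hmove : p n = p (n + 1)
      · rwa [if_neg (not_not_intro hmove), ← hmove]
      · rw [if_pos hmove, Finset.card_insert_of_notMem (by simp)]
        have := hφ _ _ ((hp.lazyStep n).resolve_right hmove)
        omega
  have hmoves := hp.card_le_pathLen (S := (Finset.range (arrivalTime g p)).filter
    fun t => p t ≠ p (t + 1)) (by simp)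
  have := key (arrivalTime g p)
  rw [hp.1, hp.eq_goal le_rfl] at this
  omega

end FeasiblePath

/-- The moves `x → x'` and `y → y'` of two robots in one time step meet or swap head-on. -/
def StepConflict (x x' y y' : V) : Prop := x = y ∨ x = y' ∧ x' = y ∧ x ≠ x'

instance [DecidableEq V] (x x' y y' : V) : Decidable (StepConflict x x' y y') :=
  inferInstanceAs (Decidable (_ ∨ _))

lemma collide_iff : Collide p q ↔ ∃ t, StepConflict (p t) (p (t + 1)) (q t) (q (t + 1)) := by
  simp only [Collide, StepConflict, exists_or]

lemma Collide.symm (h : Collide p q) : Collide q p := by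
  rcases h with ⟨t, hmeet⟩ | ⟨t, h₁, h₂, hmove⟩
  · exact Or.inl ⟨t, hmeet.symm⟩
  · exact Or.inr ⟨t, h₂.symm, h₁.symm, fun h => hmove (h₁.trans (h.symm.trans h₂.symm))⟩

lemma FeasiblePath.not_collide {s' g' : V} {T : ℕ} (hp : FeasiblePath G s g p)
    (hq : FeasiblePath G s' g' q) (hg : g ≠ g') (hpT : arrivalTime g p ≤ T)
    (hqT : arrivalTime g' q ≤ T)
    (h : ∀ t < T, ¬StepConflict (p t) (p (t + 1)) (q t) (q (t + 1))) : ¬Collide p q := by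
  rw [collide_iff]
  rintro ⟨t, ht⟩
  by_cases htT : t < T
  · exact h t htT ht
  · have hpt : ∀ u, t ≤ u → p u = g := fun u hu => hp.eq_goal (by omega)
    have hqt : ∀ u, t ≤ u → q u = g' := fun u hu => hq.eq_goal (by omega)
    simp only [StepConflict, hpt t le_rfl, hpt (t + 1) (by omega), hqt t le_rfl] at ht
    tauto

def listPath (l : List V) (g : V) : ℕ → V := fun t => l.getD t g

variable {l : List V}

lemma listPath_of_length_le {t : ℕ} (h : l.length ≤ t) : listPath l g t = g :=
  List.getD_eq_default _ _ h

lemma arrivalTime_listPath (hg : g ∉ l) : arrivalTime g (listPath l g) = l.length := by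
  refine arrivalTime_eq (listPath_of_length_le le_rfl) fun u hu h => hg ?_
  rw [listPath, List.getD_eq_getElem _ _ hu] at h
  exact h ▸ List.getElem_mem hu

lemma feasiblePath_listPath (hs : listPath l g 0 = s) (hg : g ∉ l)
    (hstep : ∀ t < l.length, LazyStep G (listPath l g t) (listPath l g (t + 1))) :
    FeasiblePath G s g (listPath l g) := by
  refine ⟨hs, ⟨_, listPath_of_length_le le_rfl⟩, fun t ht => listPath_of_length_le ?_, fun t => ?_⟩
  · rwa [arrivalTime_listPath hg] at ht
  · by_cases ht : t < l.length
    · exact hstep t ht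
    · right
      rw [listPath_of_length_le (by omega), listPath_of_length_le (by omega)]

lemma pathLen_listPath [DecidableEq V] : pathLen (listPath l g) =
    ((Finset.range l.length).filter fun t => listPath l g t ≠ listPath l g (t + 1)).card := by
  rw [pathLen, ← Set.ncard_coe_finset]
  congr 1
  ext t
  simp only [Set.mem_ofPred_eq, Finset.coe_filter, Finset.mem_range]
  refine ⟨fun hmove => ⟨?_, hmove⟩, And.right⟩
  by_contra ht
  exact hmove ((listPath_of_length_le (by omega)).trans (listPath_of_length_le (by omega)).symm)

lemma isSolution_pair {s₀ s₁ g₀ g₁ : V} {p₀ p₁ : ℕ → V} (h₀ : FeasiblePath G s₀ g₀ p₀)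
    (h₁ : FeasiblePath G s₁ g₁ p₁) (h : ¬Collide p₀ p₁) :
    IsSolution G ![s₀, s₁] ![g₀, g₁] ![p₀, p₁] := by
  refine ⟨Fin.forall_fin_two.2 ⟨h₀, h₁⟩, fun i j hij => ?_⟩
  fin_cases i <;> fin_cases j
  exacts [absurd rfl hij, h, fun hc => h hc.symm, absurd rfl hij]

end Paths

section Optima

variable {V R : Type} [Fintype R] {G : SimpleGraph V} {xI xG : R → V} {p : R → ℕ → V}

lemma arrivalTime_le_makespan (i : R) : arrivalTime (xG i) (p i) ≤ makespan xG p :=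
  Finset.le_sup (f := fun i => arrivalTime (xG i) (p i)) (Finset.mem_univ i)

lemma pathLen_le_maxDist (i : R) : pathLen (p i) ≤ maxDist p :=
  Finset.le_sup (f := fun i => pathLen (p i)) (Finset.mem_univ i)

lemma minMakespan_le (h : IsSolution G xI xG p) : minMakespan G xI xG ≤ makespan xG p :=
  Nat.sInf_le ⟨p, h, rfl⟩

lemma minMaxDist_le (h : IsSolution G xI xG p) : minMaxDist G xI xG ≤ maxDist p :=
  Nat.sInf_le ⟨p, h, rfl⟩

lemma le_minMaxDist {c : ℕ} (hsolv : ∃ p, IsSolution G xI xG p)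
    (h : ∀ p, IsSolution G xI xG p → c ≤ maxDist p) : c ≤ minMaxDist G xI xG := by
  obtain ⟨p, hp⟩ := hsolv
  exact le_csInf ⟨_, p, hp, rfl⟩ fun _ ⟨p, hp, hc⟩ => hc ▸ h p hp

end Optima

def exampleGraph : SimpleGraph (Fin 8) :=
  SimpleGraph.fromRel fun x y => x.val + 1 = y.val ∨ (x, y) = (5, 7) ∨ (x, y) = (1, 7)

instance : DecidableRel exampleGraph.Adj := fun x y =>
  inferInstanceAs (Decidable (x ≠ y ∧ (_ ∨ _)))

lemma exampleGraph_connected : exampleGraph.Connected :=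
  (SimpleGraph.pathGraph_connected 7).mono fun u v huv => by
    rw [SimpleGraph.pathGraph_adj] at huv
    revert u v
    decide

def fastSolution : Fin 2 → ℕ → Fin 8 := ![listPath [5, 7, 1] 0, listPath [2, 3, 4, 5] 6]

def shortSolution : Fin 2 → ℕ → Fin 8 := ![listPath [5, 5, 5, 7, 1] 0, listPath [2, 1, 7] 6]

lemma fastSolution_isSolution : IsSolution exampleGraph ![5, 2] ![0, 6] fastSolution := by
  have h₀ : FeasiblePath exampleGraph 5 0 (listPath [5, 7, 1] 0) :=
    feasiblePath_listPath rfl (by decide) (by decide)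
  have h₁ : FeasiblePath exampleGraph 2 6 (listPath [2, 3, 4, 5] 6) :=
    feasiblePath_listPath rfl (by decide) (by decide)
  exact isSolution_pair h₀ h₁ (h₀.not_collide (T := 4) h₁ (by decide)
    (by simp [arrivalTime_listPath]) (by simp [arrivalTime_listPath]) (by decide))

lemma shortSolution_isSolution : IsSolution exampleGraph ![5, 2] ![0, 6] shortSolution := by
  have h₀ : FeasiblePath exampleGraph 5 0 (listPath [5, 5, 5, 7, 1] 0) :=
    feasiblePath_listPath rfl (by decide) (by decide)
  have h₁ : FeasiblePath exampleGraph 2 6 (listPath [2, 1, 7] 6) :=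
    feasiblePath_listPath rfl (by decide) (by decide)
  exact isSolution_pair h₀ h₁ (h₀.not_collide (T := 5) h₁ (by decide)
    (by simp [arrivalTime_listPath]) (by simp [arrivalTime_listPath]) (by decide))

lemma makespan_fastSolution : makespan ![0, 6] fastSolution ≤ 4 :=
  Finset.sup_le fun i _ => by
    fin_cases i <;> simp [fastSolution, arrivalTime_listPath]

lemma maxDist_shortSolution : maxDist shortSolution ≤ 3 :=
  Finset.sup_le fun i _ => by
    fin_cases i <;> simp only [shortSolution, Fin.zero_eta, Fin.mk_one, Matrix.cons_val_zero,
      Matrix.cons_val_one, pathLen_listPath] <;> decide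

lemma exampleGraph_lazyStep_conflict : ∀ a₁ a₂ a₃ : Fin 8,
    LazyStep exampleGraph 5 a₁ → LazyStep exampleGraph a₁ a₂ → LazyStep exampleGraph a₂ a₃ →
    LazyStep exampleGraph a₃ 0 → (5 = a₁ ∨ a₁ = a₂ ∨ a₂ = a₃ ∨ a₃ = 0) →
    ∀ b₁ b₂ b₃ : Fin 8,
    LazyStep exampleGraph 2 b₁ → LazyStep exampleGraph b₁ b₂ → LazyStep exampleGraph b₂ b₃ →
    LazyStep exampleGraph b₃ 6 → (2 = b₁ ∨ b₁ = b₂ ∨ b₂ = b₃ ∨ b₃ = 6) →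
    StepConflict 5 a₁ 2 b₁ ∨ StepConflict a₁ a₂ b₁ b₂ ∨ StepConflict a₂ a₃ b₂ b₃ ∨
      StepConflict a₃ 0 b₃ 6 := by
  decide

lemma exampleGraph_collide {p q : ℕ → Fin 8} (hp : FeasiblePath exampleGraph 5 0 p)
    (hq : FeasiblePath exampleGraph 2 6 q) (hpa : arrivalTime 0 p ≤ 4)
    (hqa : arrivalTime 6 q ≤ 4) (hpl : pathLen p ≤ 3) (hql : pathLen q ≤ 3) : Collide p q := by
  have window : ∀ {s g : Fin 8} {r : ℕ → Fin 8}, FeasiblePath exampleGraph s g r →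
      arrivalTime g r ≤ 4 → pathLen r ≤ 3 →
      LazyStep exampleGraph s (r 1) ∧ LazyStep exampleGraph (r 1) (r 2) ∧
        LazyStep exampleGraph (r 2) (r 3) ∧ LazyStep exampleGraph (r 3) g ∧
        (s = r 1 ∨ r 1 = r 2 ∨ r 2 = r 3 ∨ r 3 = g) := by
    intro s g r hr har hrl
    obtain ⟨hr₀, hr₄⟩ : r 0 = s ∧ r 4 = g := ⟨hr.1, hr.eq_goal har⟩
    obtain ⟨t, ht, hwait⟩ := hr.exists_wait (n := 4) (by omega)
    refine ⟨hr₀ ▸ hr.lazyStep 0, hr.lazyStep 1, hr.lazyStep 2, hr₄ ▸ hr.lazyStep 3, ?_⟩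
    interval_cases t <;> simp_all
  obtain ⟨ha₁, ha₂, ha₃, ha₄, ha⟩ := window hp hpa hpl
  obtain ⟨hb₁, hb₂, hb₃, hb₄, hb⟩ := window hq hqa hql
  rw [collide_iff]
  rcases exampleGraph_lazyStep_conflict _ _ _ ha₁ ha₂ ha₃ ha₄ ha _ _ _ hb₁ hb₂ hb₃ hb₄ hb
    with h | h | h | h
  · exact ⟨0, hp.1 ▸ hq.1 ▸ h⟩
  · exact ⟨1, h⟩
  · exact ⟨2, h⟩
  · exact ⟨3, hp.eq_goal hpa ▸ hq.eq_goal hqa ▸ h⟩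

/-- There exists a solvable MPP instance such that no solution simultaneously
attains the minimum makespan and the minimum maximum distance; in particular,
every solution attaining the minimum makespan contains a robot whose traveled
distance is strictly greater than the minimum maximum distance over all
solutions. -/
theorem pareto_makespan_maxDist :
    ∃ (k : ℕ) (V : Type) (G : SimpleGraph V) (xI xG : Fin k → V),
      IsMPPInstance G xI xG ∧ (∃ p, IsSolution G xI xG p) ∧
      (¬ ∃ p, IsSolution G xI xG p ∧ makespan xG p = minMakespan G xI xG ∧
        maxDist p = minMaxDist G xI xG) ∧
      ∀ p, IsSolution G xI xG p → makespan xG p = minMakespan G xI xG →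
        ∃ i, minMaxDist G xI xG < pathLen (p i) := by
  have hmk : minMakespan exampleGraph ![5, 2] ![0, 6] ≤ 4 :=
    (minMakespan_le fastSolution_isSolution).trans makespan_fastSolution
  have hmd : minMaxDist exampleGraph ![5, 2] ![0, 6] = 3 := by
    refine le_antisymm ((minMaxDist_le shortSolution_isSolution).trans maxDist_shortSolution)
      (le_minMaxDist ⟨_, shortSolution_isSolution⟩ fun p hp => ?_)
    -- the potential is the distance to vertex `0`
    have h : 3 ≤ 0 + pathLen (p 0) :=
      (hp.1 0).potential_le_add_pathLen ![0, 1, 2, 3, 4, 3, 3, 2] (by decide)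
    exact (h.trans_eq (zero_add _)).trans (pathLen_le_maxDist 0)
  have hlong : ∀ p, IsSolution exampleGraph ![5, 2] ![0, 6] p →
      makespan ![0, 6] p = minMakespan exampleGraph ![5, 2] ![0, 6] →
      ∃ i, minMaxDist exampleGraph ![5, 2] ![0, 6] < pathLen (p i) := by
    intro p hp hp_mk
    by_contra! hshort
    rw [hmd] at hshort
    have harr (i : Fin 2) : arrivalTime (![0, 6] i) (p i) ≤ 4 :=
      (arrivalTime_le_makespan i).trans (hp_mk ▸ hmk)
    exact hp.2 (by decide : (0 : Fin 2) ≠ 1)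
      (exampleGraph_collide (hp.1 0) (hp.1 1) (harr 0) (harr 1) (hshort 0) (hshort 1))
  refine ⟨2, Fin 8, exampleGraph, ![5, 2], ![0, 6],
    ⟨exampleGraph_connected, by decide, by decide⟩, ⟨_, fastSolution_isSolution⟩, ?_, hlong⟩
  rintro ⟨p, hp, hp_mk, hp_md⟩
  obtain ⟨i, hi⟩ := hlong p hp hp_mk
  exact lt_irrefl _ (hi.trans_le ((pathLen_le_maxDist i).trans_eq hp_md))

end MPPFormal
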